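/- Let G be a finite group and H a subgroup with 1 < H < G. Then U ≤ W ∩ H ≤ D ∩ H, where U = ⟨H ∩ H^g : g ∈ G \ H⟩, W is the normal closure of U in G, and D is the subgroup generated by the elements of G lying in no conjugate of H. -/
import Mathlib

open Pointwise

section Aux

variable {G : Type*} [Group G]

private lemma mem_conj_smul (H : Subgroup G) (c y : G) :
    y ∈ MulAut.conj c⁻¹ • H ↔ c * y * c⁻¹ ∈ H := by
  rw [Subgroup.mem_pointwise_smul_iff_inv_smul_mem]
  simp [MulAut.smul_def]

private lemma fixes_iff (H : Subgroup G) (y c : G) :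
    y • ((c : G) : G ⧸ H) = (c : G ⧸ H) ↔ y ∈ MulAut.conj c • H := by
  rw [show y • ((c : G) : G ⧸ H) = ((y * c : G) : G ⧸ H) from rfl, QuotientGroup.eq,
    show MulAut.conj c = MulAut.conj (c⁻¹)⁻¹ by rw [inv_inv], mem_conj_smul, inv_inv]
  constructor
  · intro h
    have := H.inv_mem h
    simpa [mul_assoc] using this
  · intro h
    have := H.inv_mem h
    simpa [mul_assoc] using this

open MulAction Finset in
private lemma key_mem_D [Finite G] (H : Subgroup G) {g x : G}
    (hg : g ∉ H) (hxH : x ∈ H) (hxg : x ∈ MulAut.conj g⁻¹ • H) :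
    x ∈ Subgroup.closure {y : G | ∀ g : G, y ∉ MulAut.conj g⁻¹ • H} := by
  classical
  set D := Subgroup.closure {y : G | ∀ g : G, y ∉ MulAut.conj g⁻¹ • H} with hD
  by_contra hxD
  letI : Fintype G := Fintype.ofFinite G
  letI : Fintype (G ⧸ H) := Fintype.ofFinite _
  letI : Fintype {y : G // y ∈ D} := Fintype.ofFinite _
  letI : ∀ y : G, Fintype (fixedBy (G ⧸ H) y) := fun y => Fintype.ofFinite _
  letI : ∀ d : D, Fintype (fixedBy (G ⧸ H) d) := fun d => Fintype.ofFinite _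
  letI : Fintype (Quotient (orbitRel G (G ⧸ H))) := Fintype.ofFinite _
  letI : Fintype (Quotient (orbitRel D (G ⧸ H))) := Fintype.ofFinite _
  set f : G → ℕ := fun y => Fintype.card (fixedBy (G ⧸ H) y) with hf
  -- total count over G (Burnside, transitive action)
  have horb1 : Fintype.card (Quotient (orbitRel G (G ⧸ H))) = 1 := by
    have hsub : Subsingleton (orbitRel.Quotient G (G ⧸ H)) :=
      (pretransitive_iff_subsingleton_quotient G (G ⧸ H)).mp inferInstance
    have hne : Nonempty (Quotient (orbitRel G (G ⧸ H))) :=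
      ⟨Quotient.mk _ ((1 : G) : G ⧸ H)⟩
    exact le_antisymm (Fintype.card_le_one_iff_subsingleton.mpr hsub) Fintype.card_pos
  have htot : ∑ y : G, f y = Fintype.card G := by
    have := sum_card_fixedBy_eq_card_orbits_mul_card_group G (G ⧸ H)
    rw [horb1, one_mul] at this
    exact this
  -- count over D (Burnside, at least one orbit)
  have hDsum : Fintype.card D ≤ ∑ d : D, Fintype.card (fixedBy (G ⧸ H) d) := by
    rw [sum_card_fixedBy_eq_card_orbits_mul_card_group (D : Subgroup G) (G ⧸ H)]
    have hne : Nonempty (Quotient (orbitRel D (G ⧸ H))) :=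
      ⟨Quotient.mk _ ((1 : G) : G ⧸ H)⟩
    have hpos : 0 < Fintype.card (Quotient (orbitRel D (G ⧸ H))) := Fintype.card_pos
    exact Nat.le_mul_of_pos_left _ hpos
  have hDfix : ∀ d : D, Fintype.card (fixedBy (G ⧸ H) d) = f (d : G) := by
    intro d
    exact Fintype.card_congr (Equiv.setCongr (by ext ω; simp [mem_fixedBy]; rfl))
  have hsum1 : ∑ y ∈ univ.filter (fun y => y ∈ D), f y
      = ∑ d : D, Fintype.card (fixedBy (G ⧸ H) d) := by
    rw [Finset.sum_subtype (p := fun y => y ∈ D) (univ.filter (fun y => y ∈ D)) (by simp) f]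
    exact Finset.sum_congr rfl fun d _ => (hDfix d).symm
  -- non-elements of D all have a fixed point
  have h1le : ∀ y ∈ univ.filter (fun y => y ∉ D), 1 ≤ f y := by
    intro y hy
    simp only [mem_filter, mem_univ, true_and] at hy
    rw [Nat.one_le_iff_ne_zero]
    intro h0
    apply hy
    apply Subgroup.subset_closure
    intro c hc
    have hfix : y • ((c⁻¹ : G) : G ⧸ H) = ((c⁻¹ : G) : G ⧸ H) := by
      rw [fixes_iff H y c⁻¹, mem_conj_smul H c y]
      rwa [mem_conj_smul H c y] at hc
    haveI : Nonempty (fixedBy (G ⧸ H) y) := ⟨⟨_, hfix⟩⟩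
    exact absurd h0 Fintype.card_ne_zero
  -- x has at least two fixed points
  have hx2 : 2 ≤ f x := by
    have hfix1 : x • ((1 : G) : G ⧸ H) = ((1 : G) : G ⧸ H) := by
      rw [fixes_iff H x 1]
      simpa using hxH
    have hfix2 : x • ((g⁻¹ : G) : G ⧸ H) = ((g⁻¹ : G) : G ⧸ H) := by
      rw [fixes_iff H x g⁻¹]
      exact hxg
    have hne : ((1 : G) : G ⧸ H) ≠ ((g⁻¹ : G) : G ⧸ H) := by
      intro h
      rw [QuotientGroup.eq] at h
      simp only [inv_one, one_mul] at h
      exact hg (by simpa using H.inv_mem h)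
    have : 1 < Fintype.card (fixedBy (G ⧸ H) x) := by
      rw [Fintype.one_lt_card_iff]
      exact ⟨⟨_, hfix1⟩, ⟨_, hfix2⟩, by simpa [Subtype.ext_iff] using hne⟩
    exact this
  have hxmem : x ∈ univ.filter (fun y => y ∉ D) := by simp [hxD]
  have hstrict : (univ.filter (fun y => y ∉ D)).card <
      ∑ y ∈ univ.filter (fun y => y ∉ D), f y := by
    rw [Finset.card_eq_sum_ones]
    exact Finset.sum_lt_sum h1le ⟨x, hxmem, by omega⟩
  have hsplit : ∑ y ∈ univ.filter (fun y => y ∈ D), f y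
      + ∑ y ∈ univ.filter (fun y => y ∉ D), f y = Fintype.card G := by
    rw [Finset.sum_filter_add_sum_filter_not]
    exact htot
  have hcardD : (univ.filter (fun y => y ∈ D)).card = Fintype.card D := by
    rw [Finset.card_eq_sum_ones,
      Finset.sum_subtype (p := fun y => y ∈ D) (univ.filter (fun y => y ∈ D)) (by simp)
        (fun _ => 1)]
    · simp
    · infer_instance
  have hcards : (univ.filter (fun y => y ∈ D)).card
      + (univ.filter (fun y => y ∉ D)).card = Fintype.card G := by
    rw [Finset.card_filter_add_card_filter_not, Finset.card_univ]
  omega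

end Aux

/-- `U ≤ W ⊓ H ≤ D ⊓ H`. -/
theorem stmt_6 {G : Type*} [Group G] [Finite G] (H : Subgroup G)
    (hbot : H ≠ ⊥) (htop : H ≠ ⊤) :
    let U : Subgroup G := Subgroup.closure (⋃ g ∈ {g : G | g ∉ H},
      ((H ⊓ MulAut.conj g⁻¹ • H : Subgroup G) : Set G))
    let W : Subgroup G := Subgroup.normalClosure (U : Set G)
    let D : Subgroup G := Subgroup.closure {y : G | ∀ g : G, y ∉ MulAut.conj g⁻¹ • H}
    U ≤ W ⊓ H ∧ W ⊓ H ≤ D ⊓ H := by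
  intro U W D
  have hUH : U ≤ H := by
    apply Subgroup.closure_le _ |>.mpr
    intro y hy
    simp only [Set.mem_iUnion] at hy
    obtain ⟨g, _, hy⟩ := hy
    exact hy.1
  have hUD : U ≤ D := by
    apply Subgroup.closure_le _ |>.mpr
    intro y hy
    simp only [Set.mem_iUnion] at hy
    obtain ⟨g, hg, hy⟩ := hy
    exact key_mem_D H hg hy.1 hy.2
  have hDnormal : D.Normal := by
    constructor
    intro n hn k
    have himg : (MulAut.conj k) '' {y : G | ∀ g : G, y ∉ MulAut.conj g⁻¹ • H}
        ⊆ {y : G | ∀ g : G, y ∉ MulAut.conj g⁻¹ • H} := by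
      rintro _ ⟨y, hy, rfl⟩
      intro c hc
      apply hy (c * k)
      rw [mem_conj_smul H (c * k) y]
      rw [mem_conj_smul H c _] at hc
      simpa [MulAut.conj_apply, mul_assoc] using hc
    have : (MulAut.conj k) n ∈ Subgroup.map (MulAut.conj k).toMonoidHom D := by
      exact Subgroup.mem_map_of_mem _ hn
    rw [show (D : Subgroup G) = Subgroup.closure _ from rfl,
      MonoidHom.map_closure] at this
    have h3 := (Subgroup.closure_mono himg) this
    have h4 : (MulAut.conj k) n = k * n * k⁻¹ := by simp [MulAut.conj_apply]
    rw [← h4]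
    exact h3
  refine ⟨le_inf Subgroup.le_normalClosure hUH, ?_⟩
  have hWD : W ≤ D := Subgroup.normalClosure_le_normal hUD
  exact inf_le_inf_right H hWD
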